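/- arXiv:2509.11281 — 3 statements merged into one kernel-verified Lean document; each statement's English description precedes it below -/
import Mathlib

section
/- In the setting of the chain-based null distance: let X be a set, R a relation on X, τ : X → ℝ, and d a metric on X. Suppose the anti-Lipschitz condition holds: for all (p,q) ∈ R, τ(q) − τ(p) ≥ d(p,q). Then for all p, q ∈ X (joined by at least one R-chain), d̂_τ(p,q) ≥ d(p,q). In particular, d̂_τ is a definite metric: d̂_τ(p,q) = 0 implies p = q. -/
/-! Each step of a chain is anti-Lipschitz in one direction or the other, so its null length
bounds its `d`-length, which bounds `d(p, q)` by the triangle inequality; `dist p q` is then a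
lower bound of the (nonempty) set of chain lengths, hence of its infimum. -/

variable {X : Type*}

/-- The set of null lengths of `R`-chains from `p` to `q`: finite sequences
`x 0 = p, …, x m = q` with `m ≥ 1` whose consecutive points are related by `R`
in one direction or the other, with length `∑ |τ(x_{i+1}) - τ(x_i)|`. -/
def chainLengths (R : X → X → Prop) (τ : X → ℝ) (p q : X) : Set ℝ :=
  {L | ∃ m : ℕ, ∃ x : Fin (m + 1) → X, 0 < m ∧ x 0 = p ∧ x (Fin.last m) = q ∧
    (∀ i : Fin m, R (x i.castSucc) (x i.succ) ∨ R (x i.succ) (x i.castSucc)) ∧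
    L = ∑ i : Fin m, |τ (x i.succ) - τ (x i.castSucc)|}

/-- The chain-based null distance of Sormani–Vega. -/
noncomputable def nullDist (R : X → X → Prop) (τ : X → ℝ) (p q : X) : ℝ :=
  sInf (chainLengths R τ p q)

theorem dist_le_sum_dist_castSucc_succ {α : Type*} [PseudoMetricSpace α] :
    ∀ {m : ℕ} (x : Fin (m + 1) → α),
      dist (x 0) (x (Fin.last m)) ≤ ∑ i : Fin m, dist (x i.castSucc) (x i.succ)
  | 0, _ => by simp
  | m + 1, x => by
    rw [Fin.sum_univ_castSucc]
    calc dist (x 0) (x (Fin.last (m + 1)))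
        ≤ dist (x 0) (x (Fin.last m).castSucc)
            + dist (x (Fin.last m).castSucc) (x (Fin.last (m + 1))) := dist_triangle _ _ _
      _ ≤ _ := add_le_add_left (dist_le_sum_dist_castSucc_succ fun i => x i.castSucc) _

theorem dist_le_abs_sub_of_antiLipschitz [PseudoMetricSpace X]
    {R : X → X → Prop} {τ : X → ℝ}
    (hanti : ∀ p q : X, R p q → dist p q ≤ τ q - τ p) {a b : X} (hab : R a b ∨ R b a) :
    dist a b ≤ |τ b - τ a| := by
  rcases hab with h | h
  · exact (hanti a b h).trans (le_abs_self _)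
  · rw [dist_comm, abs_sub_comm]
    exact (hanti b a h).trans (le_abs_self _)

theorem dist_le_of_mem_chainLengths [PseudoMetricSpace X] {R : X → X → Prop} {τ : X → ℝ}
    (hanti : ∀ p q : X, R p q → dist p q ≤ τ q - τ p) {p q : X} {L : ℝ}
    (hL : L ∈ chainLengths R τ p q) : dist p q ≤ L := by
  obtain ⟨m, x, -, rfl, rfl, hR, rfl⟩ := hL
  calc dist (x 0) (x (Fin.last m))
      ≤ ∑ i : Fin m, dist (x i.castSucc) (x i.succ) := dist_le_sum_dist_castSucc_succ x
    _ ≤ ∑ i : Fin m, |τ (x i.succ) - τ (x i.castSucc)| :=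
      Finset.sum_le_sum fun i _ => dist_le_abs_sub_of_antiLipschitz hanti (hR i)

/-- If `τ` is anti-Lipschitz along `R` with respect to a metric `d`, then the
null distance dominates `d`; in particular it is definite. -/
theorem nullDist_ge_dist_of_antiLipschitz
    [MetricSpace X] (R : X → X → Prop) (τ : X → ℝ)
    (hne : ∀ p q : X, (chainLengths R τ p q).Nonempty)
    (hanti : ∀ p q : X, R p q → dist p q ≤ τ q - τ p) :
    (∀ p q : X, dist p q ≤ nullDist R τ p q) ∧
    (∀ p q : X, nullDist R τ p q = 0 → p = q) := by
  have hle : ∀ p q : X, dist p q ≤ nullDist R τ p q := fun p q =>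
    le_csInf (hne p q) fun _ hL => dist_le_of_mem_chainLengths hanti hL
  exact ⟨hle, fun p q h0 => dist_le_zero.mp (h0 ▸ hle p q)⟩
end

section
/- In the setting of the chain-based null distance: let X be a set, R a transitive relation, and τ : X → ℝ with τ(p) ≤ τ(q) whenever (p,q) ∈ R. If (p,q) ∈ R, then d̂_τ(p,q) ≤ τ(q) − τ(p). If moreover the anti-Lipschitz condition τ(q') − τ(p') ≥ d(p',q') holds for a metric d and all (p',q') ∈ R, then (p,q) ∈ R implies d̂_τ(p,q) = τ(q) − τ(p). -/
variable {X : Type*}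

lemma fin_telescope : ∀ (m : ℕ) (f : Fin (m + 1) → ℝ),
    ∑ i : Fin m, (f i.succ - f i.castSucc) = f (Fin.last m) - f 0
  | 0, f => by simp [Fin.last]
  | m + 1, f => by
    rw [Fin.sum_univ_castSucc]
    have := fin_telescope m (fun i => f i.castSucc)
    simp only [Fin.succ_castSucc] at this ⊢
    rw [this]
    simp [Fin.succ_last]

lemma mem_chainLengths_single {X : Type*} (R : X → X → Prop) (τ : X → ℝ) (p q : X)
    (h : R p q) : |τ q - τ p| ∈ chainLengths R τ p q := by
  refine ⟨1, ![p, q], Nat.one_pos, rfl, rfl, ?_, ?_⟩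
  · intro i
    fin_cases i
    exact Or.inl h
  · simp

lemma chainLengths_lower {X : Type*} (R : X → X → Prop) (τ : X → ℝ) (p q : X)
    {L : ℝ} (hL : L ∈ chainLengths R τ p q) : |τ q - τ p| ≤ L := by
  obtain ⟨m, x, hm, h0, hlast, _, rfl⟩ := hL
  have key : ∑ i : Fin m, (τ (x i.succ) - τ (x i.castSucc))
      = τ (x (Fin.last m)) - τ (x 0) := fin_telescope m (fun i => τ (x i))
  calc |τ q - τ p| = |∑ i : Fin m, (τ (x i.succ) - τ (x i.castSucc))| := by
        rw [key, h0, hlast]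
    _ ≤ ∑ i : Fin m, |τ (x i.succ) - τ (x i.castSucc)| :=
        Finset.abs_sum_le_sum_abs _ _

lemma chainLengths_bddBelow {X : Type*} (R : X → X → Prop) (τ : X → ℝ) (p q : X) :
    BddBelow (chainLengths R τ p q) :=
  ⟨|τ q - τ p|, fun _ hL => chainLengths_lower R τ p q hL⟩

/-- For a transitive causal relation `R` along which `τ` is nondecreasing,
causally related points satisfy `d̂_τ(p,q) ≤ τ(q) − τ(p)`; if moreover `τ` is
anti-Lipschitz with respect to a metric, then equality holds. -/
theorem nullDist_eq_tau_diff_of_causal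
    [MetricSpace X] (R : X → X → Prop) (τ : X → ℝ)
    (htrans : Transitive R)
    (hmono : ∀ p q : X, R p q → τ p ≤ τ q) :
    (∀ p q : X, R p q → nullDist R τ p q ≤ τ q - τ p) ∧
    ((∀ p' q' : X, R p' q' → dist p' q' ≤ τ q' - τ p') →
      ∀ p q : X, R p q → nullDist R τ p q = τ q - τ p) := by
  have hle : ∀ p q : X, R p q → nullDist R τ p q ≤ τ q - τ p := by
    intro p q h
    have h1 : nullDist R τ p q ≤ |τ q - τ p| :=
      csInf_le (chainLengths_bddBelow R τ p q) (mem_chainLengths_single R τ p q h)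
    rwa [abs_of_nonneg (by linarith [hmono p q h])] at h1
  refine ⟨hle, fun _ p q h => le_antisymm (hle p q h) ?_⟩
  have h2 : τ q - τ p ≤ |τ q - τ p| := le_abs_self _
  refine le_trans h2 (le_csInf ⟨_, mem_chainLengths_single R τ p q h⟩ ?_)
  exact fun L hL => chainLengths_lower R τ p q hL
end

section
/- Let h : [0, r] → ℝ be differentiable with h(0) = 2, h ≥ 0, and |h'(λ)| ≤ C h(λ)^{3/2} for all λ ∈ [0, r], where C > 0. Then there exist constants C' > 0 and r' ∈ (0, r], depending only on C, such that |h(λ) − 2| ≤ C' λ for all λ ∈ [0, r']. -/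
/-- If `h(0) = 2`, `h ≥ 0`, and `|h'| ≤ C h^{3/2}` on `[0,r]`, then
`h = 2 + O(λ)` near `0`, with constants depending only on `C`. -/
theorem nonlinear_gronwall_estimate
    (r : ℝ) (hr : 0 < r)
    (h h' : ℝ → ℝ) (C : ℝ) (hC : 0 < C)
    (hderiv : ∀ t ∈ Set.Icc (0 : ℝ) r, HasDerivAt h (h' t) t)
    (h0 : h 0 = 2)
    (hnonneg : ∀ t ∈ Set.Icc (0 : ℝ) r, 0 ≤ h t)
    (hineq : ∀ t ∈ Set.Icc (0 : ℝ) r, |h' t| ≤ C * (h t) ^ ((3 : ℝ) / 2)) :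
    ∃ C' > 0, ∃ r' ∈ Set.Ioc (0 : ℝ) r,
      ∀ t ∈ Set.Icc (0 : ℝ) r', |h t - 2| ≤ C' * t := by
  set r' : ℝ := min r (1 / (8 * C)) with hr'def
  have hr'pos : 0 < r' := lt_min hr (by positivity)
  have hr'r : r' ≤ r := min_le_left _ _
  have hr'C : 8 * C * r' ≤ 1 := by
    have : r' ≤ 1 / (8 * C) := min_le_right _ _
    calc 8 * C * r' ≤ 8 * C * (1 / (8 * C)) := by
          apply mul_le_mul_of_nonneg_left this (by positivity)
      _ = 1 := by field_simp
  have hsub : Set.Icc (0 : ℝ) r' ⊆ Set.Icc (0 : ℝ) r :=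
    Set.Icc_subset_Icc le_rfl hr'r
  have four_pow : (4 : ℝ) ^ ((3 : ℝ) / 2) = 8 := by
    have h4 : (4 : ℝ) = 2 ^ (2 : ℝ) := by
      rw [show (2:ℝ) ^ (2:ℝ) = 2 ^ (2:ℕ) from Real.rpow_natCast 2 2]; norm_num
    rw [h4, ← Real.rpow_mul (by norm_num : (0:ℝ) ≤ 2)]
    norm_num
  -- key estimate: if h ≤ 4 on [0,t], then |h t - 2| ≤ 8C t
  have key : ∀ t ∈ Set.Icc (0 : ℝ) r', (∀ s ∈ Set.Icc (0 : ℝ) t, h s ≤ 4) →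
      |h t - 2| ≤ 8 * C * t := by
    intro t ht hb
    have hsub2 : Set.Icc (0 : ℝ) t ⊆ Set.Icc (0 : ℝ) r :=
      Set.Icc_subset_Icc le_rfl (ht.2.trans hr'r)
    have bound : ∀ x ∈ Set.Icc (0 : ℝ) t, ‖h' x‖ ≤ 8 * C := by
      intro x hx
      have hx' := hsub2 hx
      have h1 : |h' x| ≤ C * (h x) ^ ((3 : ℝ) / 2) := hineq x hx'
      have h2 : (h x) ^ ((3 : ℝ) / 2) ≤ (4 : ℝ) ^ ((3 : ℝ) / 2) :=
        Real.rpow_le_rpow (hnonneg x hx') (hb x hx) (by norm_num)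
      rw [Real.norm_eq_abs]
      calc |h' x| ≤ C * (h x) ^ ((3 : ℝ) / 2) := h1
        _ ≤ C * (4 : ℝ) ^ ((3 : ℝ) / 2) :=
            mul_le_mul_of_nonneg_left h2 hC.le
        _ = 8 * C := by rw [four_pow]; ring
    have hd : ∀ x ∈ Set.Icc (0 : ℝ) t,
        HasDerivWithinAt h (h' x) (Set.Icc (0 : ℝ) t) x :=
      fun x hx => (hderiv x (hsub2 hx)).hasDerivWithinAt
    have := (convex_Icc (0 : ℝ) t).norm_image_sub_le_of_norm_hasDerivWithin_le
      hd bound (Set.left_mem_Icc.mpr ht.1) (Set.right_mem_Icc.mpr ht.1)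
    rw [h0, Real.norm_eq_abs, Real.norm_eq_abs, sub_zero, abs_of_nonneg ht.1] at this
    exact this
  -- continuity of h on [0, r']
  have hcont : ContinuousOn h (Set.Icc (0 : ℝ) r') := fun x hx =>
    (hderiv x (hsub hx)).continuousAt.continuousWithinAt
  -- bootstrap: h ≤ 4 on [0, r']
  have h4 : ∀ t ∈ Set.Icc (0 : ℝ) r', h t ≤ 4 := by
    by_contra hcon
    push_neg at hcon
    set A : Set ℝ := Set.Icc (0 : ℝ) r' ∩ h ⁻¹' Set.Ici 4 with hAdef
    have hAne : A.Nonempty := by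
      obtain ⟨t, ht, h4t⟩ := hcon
      exact ⟨t, ht, le_of_lt h4t⟩
    have hAclosed : IsClosed A :=
      hcont.preimage_isClosed_of_isClosed isClosed_Icc isClosed_Ici
    have hAbdd : BddBelow A := ⟨0, fun x hx => hx.1.1⟩
    set t₀ := sInf A with ht₀def
    have ht₀A : t₀ ∈ A := hAclosed.csInf_mem hAne hAbdd
    have ht₀r' : t₀ ∈ Set.Icc (0 : ℝ) r' := ht₀A.1
    have ht₀4 : 4 ≤ h t₀ := ht₀A.2
    have ht₀pos : 0 < t₀ := by
      rcases lt_or_eq_of_le ht₀r'.1 with hlt | heq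
      · exact hlt
      · exfalso; rw [← heq, h0] at ht₀4; norm_num at ht₀4
    -- for s < t₀ in [0, r'], h s ≤ 3
    have hlt3 : ∀ s ∈ Set.Ico (0 : ℝ) t₀, h s ≤ 3 := by
      intro s hs
      have hsr' : s ∈ Set.Icc (0 : ℝ) r' := ⟨hs.1, hs.2.le.trans ht₀r'.2⟩
      have hnotA : ∀ u ∈ Set.Icc (0 : ℝ) s, h u ≤ 4 := by
        intro u hu
        by_contra hu4
        push_neg at hu4
        have huA : u ∈ A := ⟨⟨hu.1, (hu.2.trans hsr'.2)⟩, hu4.le⟩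
        have : t₀ ≤ u := csInf_le hAbdd huA
        exact absurd hs.2 (not_lt.mpr (this.trans hu.2))
      have := key s hsr' hnotA
      have h8 : 8 * C * s ≤ 1 := by
        calc 8 * C * s ≤ 8 * C * r' :=
            mul_le_mul_of_nonneg_left hsr'.2 (by positivity)
          _ ≤ 1 := hr'C
      have := abs_le.mp (this.trans h8)
      linarith [this.2]
    -- take the limit s → t₀⁻
    have hne : Filter.NeBot (nhdsWithin t₀ (Set.Ico 0 t₀)) := by
      rw [← mem_closure_iff_nhdsWithin_neBot, closure_Ico ht₀pos.ne]
      exact Set.right_mem_Icc.mpr ht₀pos.le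
    have htend : Filter.Tendsto h (nhdsWithin t₀ (Set.Ico 0 t₀)) (nhds (h t₀)) :=
      (hcont t₀ ht₀r').mono (fun x hx => ⟨hx.1, hx.2.le.trans ht₀r'.2⟩)
    have hle3 : h t₀ ≤ 3 :=
      le_of_tendsto htend
        (Filter.eventually_iff_exists_mem.mpr
          ⟨Set.Ico 0 t₀, self_mem_nhdsWithin, hlt3⟩)
    linarith
  refine ⟨8 * C, by positivity, r', ⟨hr'pos, hr'r⟩, fun t ht => ?_⟩
  exact key t ht (fun s hs => h4 s ⟨hs.1, hs.2.trans ht.2⟩)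
end
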